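/- Let D be an n×n real matrix, λ a nonzero real, α, β column vectors with α^T j = 1 and j^T β = 1, and L an n×n matrix with L j = 0, such that α^T D = λ j^T and L D + I = β j^T. Then j^T D^{-1} j = 1/λ; consequently cof(D) = det(D)/λ. -/

import Mathlib

open Matrix

theorem stmt_15 {n : ℕ} (D L : Matrix (Fin n) (Fin n) ℝ) (lam : ℝ) (hlam : lam ≠ 0)
    (α β : Fin n → ℝ)
    (hα : (∑ i, α i) = 1) (hβ : (∑ i, β i) = 1)
    (hLj : L.mulVec (fun _ => 1) = 0)
    (h1 : vecMul α D = fun _ => lam)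
    (h2 : L * D + 1 = vecMulVec β (fun _ => 1)) :
    (∑ i, ∑ j, D⁻¹ i j) = 1 / lam ∧ (∑ i, ∑ j, D.adjugate i j) = D.det / lam := by
  set B : Matrix (Fin n) (Fin n) ℝ := -L + (1/lam) • vecMulVec β α with hB
  have hLD : L * D = vecMulVec β (fun _ => 1) - 1 := eq_sub_of_add_eq h2
  have hBD : B * D = 1 := by
    ext i j
    have hα1 : ∑ k, α k * D k j = lam := by
      have := congrFun h1 j
      simpa [vecMul, dotProduct] using this
    have hL : ∑ k, L i k * D k j = β i * 1 - (1 : Matrix (Fin n) (Fin n) ℝ) i j := by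
      have := congrFun (congrFun hLD i) j
      simpa [mul_apply, vecMulVec, Matrix.sub_apply] using this
    simp only [hB, add_mul, neg_mul, Matrix.add_apply, Matrix.neg_apply, mul_apply, Matrix.smul_apply,
      vecMulVec_apply, smul_eq_mul]
    have hsum2 : ∑ k, 1 / lam * (β i * α k) * D k j = 1/lam * (β i * (∑ k, α k * D k j)) := by
      rw [Finset.mul_sum, Finset.mul_sum]; refine Finset.sum_congr rfl fun k _ => by ring
    rw [Finset.sum_add_distrib, Finset.sum_neg_distrib, hL, hsum2, hα1]
    have hb : 1/lam * (β i * lam) = β i := by field_simp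
    rw [hb]; ring
  have hinv : D⁻¹ = B := Matrix.inv_eq_left_inv hBD
  have hdet : IsUnit D.det := by
    have hd := congrArg Matrix.det hBD
    rw [Matrix.det_mul, Matrix.det_one] at hd
    exact IsUnit.of_mul_eq_one (a := D.det) B.det (by rw [mul_comm]; exact hd)
  have hLsum : ∑ i, ∑ j, L i j = 0 := by
    have h : ∀ i, ∑ j, L i j = 0 := by
      intro i
      have := congrFun hLj i
      simpa [mulVec, dotProduct] using this
    simp [h]
  have hsum : (∑ i, ∑ j, D⁻¹ i j) = 1 / lam := by
    rw [hinv]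
    simp only [hB, Matrix.add_apply, Matrix.neg_apply, Matrix.smul_apply, vecMulVec_apply, smul_eq_mul,
      Finset.sum_add_distrib, Finset.sum_neg_distrib]
    rw [hLsum]
    simp only [← Finset.mul_sum, hα, mul_one]
    rw [hβ]; ring
  refine ⟨hsum, ?_⟩
  have hadj : ∀ i j, D.adjugate i j = D.det * D⁻¹ i j := by
    intro i j
    rw [Matrix.inv_def, Ring.inverse_eq_inv']
    simp only [Matrix.smul_apply, smul_eq_mul]
    rw [← mul_assoc, mul_inv_cancel₀ (isUnit_iff_ne_zero.mp hdet), one_mul]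
  calc (∑ i, ∑ j, D.adjugate i j) = D.det * (∑ i, ∑ j, D⁻¹ i j) := by
        simp only [hadj, Finset.mul_sum]
    _ = D.det / lam := by rw [hsum]; ring
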